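/- The number of maximal matchings in an undirected cycle with ℓ ≥ 3 edges equals the Perrin number Q_ℓ, where Q_1 = 0, Q_2 = 2, Q_3 = 3, and Q_n = Q_{n-2} + Q_{n-3}. -/

import Mathlib

/-- The Perrin sequence with `perrin 1 = 0`, `perrin 2 = 2`, `perrin 3 = 3` and
`perrin n = perrin (n-2) + perrin (n-3)`. -/
def perrin : ℕ → ℕ
  | 0 => 3
  | 1 => 0
  | 2 => 2
  | 3 => 3
  | n + 4 => perrin (n + 2) + perrin (n + 1)

/-- The cycle graph with `n` edges, on vertices `ZMod n`, with edges `{i, i+1}`. -/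
def cycleGraph (n : ℕ) : SimpleGraph (ZMod n) :=
  SimpleGraph.fromRel (fun u v => v = u + 1)

/-- A matching in a simple graph `G`: a set of edges of `G` that are pairwise
vertex-disjoint (the empty set is allowed). -/
def IsMatching {V : Type*} (G : SimpleGraph V) (M : Set (Sym2 V)) : Prop :=
  M ⊆ G.edgeSet ∧ ∀ e ∈ M, ∀ f ∈ M, e ≠ f → ∀ v : V, ¬(v ∈ e ∧ v ∈ f)

/-- A maximal matching: a matching not properly contained in any other matching. -/
def IsMaximalMatching {V : Type*} (G : SimpleGraph V) (M : Set (Sym2 V)) : Prop :=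
  IsMatching G M ∧ ∀ M' : Set (Sym2 V), IsMatching G M' → M ⊆ M' → M' = M

/-!
A maximal matching of the cycle is determined by the set `S` of indices `i` of its edges
`{i, i + 1}`: disjointness says that `S` has no two consecutive elements, maximality that it meets
any three consecutive indices. Recording at each index the distance `0`, `1` or `2` to the next
element of `S` turns these sets into closed walks of length `ℓ` in a digraph on three states, which
are counted by the trace of the `ℓ`-th power of its adjacency matrix `T`. As `T ^ 3 = T + 1`, these
traces obey the Perrin recurrence.
-/

theorem isMaximalMatching_iff_maximal {V : Type*} {G : SimpleGraph V} {M : Set (Sym2 V)} :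
    IsMaximalMatching G M ↔ Maximal (IsMatching G) M :=
  and_congr_right fun _ =>
    forall₃_congr fun _ _ hMM' => ⟨fun h => (h ▸ le_rfl), fun h => h.antisymm hMM'⟩

section TransferMatrix

variable {α : Type*} (R : α → α → Prop)

def relMatrix [DecidableRel R] : Matrix α α ℕ := Matrix.of fun a b => if R a b then 1 else 0

abbrev RelChain (n : ℕ) (a b : α) :=
  {w : Fin (n + 1) → α // w 0 = a ∧ w (Fin.last n) = b ∧ ∀ i : Fin n, R (w i.castSucc) (w i.succ)}

abbrev CyclicChain (n : ℕ) := {g : ZMod n → α // ∀ i, R (g i) (g (i + 1))}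

def relChainSuccEquiv (n : ℕ) (a b : α) :
    RelChain R (n + 1) a b ≃ Σ c : {c // R c b}, RelChain R n a c where
  toFun w :=
    ⟨⟨w.1 (Fin.last n).castSucc, by simpa [w.2.2.1] using w.2.2.2 (Fin.last n)⟩,
    ⟨Fin.init w.1, w.2.1, rfl, fun i => w.2.2.2 i.castSucc⟩⟩
  invFun v := ⟨Fin.snoc v.2.1 b, by simpa using v.2.2.1, by simp, fun i => by
    induction i using Fin.lastCases with
    | last => simpa [v.2.2.2.1] using v.1.2
    | cast i =>
      rw [Fin.succ_castSucc, Fin.snoc_castSucc, Fin.snoc_castSucc]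
      exact v.2.2.2.2 i⟩
  left_inv w := Subtype.ext <| by simp [← w.2.2.1]
  right_inv v := Sigma.subtype_ext (Subtype.ext <| by simp [v.2.2.2.1]) (by simp)

section Cyclic

variable {R} {n : ℕ} [NeZero n]

def RelChain.toZMod {a : α} (w : RelChain R n a a) : ZMod n → α :=
  fun x => w.1 (Fin.castSucc ⟨x.val, x.val_lt⟩)

theorem RelChain.toZMod_natCast {a : α} (w : RelChain R n a a) (j : Fin (n + 1)) :
    w.toZMod (j : ℕ) = w.1 j := by
  induction j using Fin.lastCases with
  | last => simp [toZMod, w.2.1, w.2.2.1]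
  | cast j => simp [toZMod, ZMod.val_natCast_of_lt j.isLt]

variable (R n)

def cyclicChainEquivSigma : CyclicChain R n ≃ Σ a, RelChain R n a a where
  toFun g := ⟨g.1 0, fun j => g.1 (j : ℕ), by simp, by simp, fun i => by simpa using g.2 i⟩
  invFun w := ⟨w.2.toZMod, fun x => by
    have h := w.2.2.2.2 ⟨x.val, x.val_lt⟩
    rw [← w.2.toZMod_natCast, ← w.2.toZMod_natCast] at h
    simpa using h⟩
  left_inv g := Subtype.ext <| funext fun x => by simp [RelChain.toZMod]
  right_inv w := Sigma.subtype_ext (by simpa [w.2.2.1] using w.2.toZMod_natCast 0)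
    (funext w.2.toZMod_natCast)

end Cyclic

variable [Fintype α] [DecidableEq α] [DecidableRel R]

theorem card_relChain (n : ℕ) (a b : α) :
    Fintype.card (RelChain R n a b) = (relMatrix R ^ n) a b := by
  induction n generalizing b with
  | zero =>
    rw [pow_zero, Matrix.one_apply]
    split_ifs with h
    · subst h
      exact Fintype.card_eq_one_iff.mpr ⟨⟨fun _ => a, rfl, rfl, Fin.elim0⟩,
        fun w => Subtype.ext <| funext fun j => Fin.fin_one_eq_zero j ▸ w.2.1⟩
    · exact Fintype.card_eq_zero_iff.mpr ⟨fun w => h (w.2.1.symm.trans w.2.2.1)⟩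
  | succ n ih =>
    rw [Fintype.card_congr (relChainSuccEquiv R n a b), Fintype.card_sigma, pow_succ,
      Matrix.mul_apply]
    simp only [ih, relMatrix, Matrix.of_apply, mul_ite, mul_one, mul_zero, Finset.sum_ite,
      Finset.sum_const_zero, add_zero]
    exact (Finset.sum_subtype _ (by simp) _).symm

theorem card_cyclicChain (n : ℕ) [NeZero n] :
    Fintype.card (CyclicChain R n) = (relMatrix R ^ n).trace := by
  rw [Fintype.card_congr (cyclicChainEquivSigma R n), Fintype.card_sigma]
  simp only [card_relChain, Matrix.trace, Matrix.diag]

end TransferMatrix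

section CycleGraph

variable {n : ℕ}

def cycleEdge (i : ZMod n) : Sym2 (ZMod n) := s(i, i + 1)

theorem cycleEdge_injective (hn : (2 : ZMod n) ≠ 0) :
    Function.Injective (cycleEdge (n := n)) := by
  intro i j h
  rcases Sym2.eq_iff.mp h with ⟨h1, -⟩ | ⟨h1, h2⟩
  · exact h1
  · exact absurd (by linear_combination h2 - h1) hn

theorem edgeSet_cycleGraph (hn : (1 : ZMod n) ≠ 0) :
    (cycleGraph n).edgeSet = Set.range cycleEdge := by
  ext e
  induction e with
  | _ u v =>
    simp only [SimpleGraph.mem_edgeSet, cycleGraph, SimpleGraph.fromRel_adj, Set.mem_range,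
      cycleEdge]
    constructor
    · rintro ⟨-, rfl | rfl⟩
      · exact ⟨u, rfl⟩
      · exact ⟨v, Sym2.eq_swap⟩
    · rintro ⟨i, hi⟩
      have hne : i ≠ i + 1 := fun h => hn (left_eq_add.mp h)
      rcases Sym2.eq_iff.mp hi with ⟨rfl, rfl⟩ | ⟨rfl, rfl⟩
      · exact ⟨hne, Or.inl rfl⟩
      · exact ⟨hne.symm, Or.inr rfl⟩

theorem exists_mem_cycleEdge_iff {i j : ZMod n} :
    (∃ v, v ∈ cycleEdge i ∧ v ∈ cycleEdge j) ↔ j = i - 1 ∨ j = i ∨ j = i + 1 := by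
  simp only [cycleEdge, Sym2.mem_iff]
  constructor
  · rintro ⟨v, rfl | rfl, h | h⟩
    · exact Or.inr (Or.inl h.symm)
    · exact Or.inl (by linear_combination -h)
    · exact Or.inr (Or.inr h.symm)
    · exact Or.inr (Or.inl (by linear_combination -h))
  · rintro (rfl | rfl | rfl)
    · exact ⟨i, Or.inl rfl, Or.inr (by ring)⟩
    · exact ⟨j, Or.inl rfl, Or.inl rfl⟩
    · exact ⟨i + 1, Or.inr rfl, Or.inl rfl⟩

def NoConsecutive (S : Set (ZMod n)) : Prop := ∀ i ∈ S, i + 1 ∉ S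

theorem isMatching_cycleGraph_iff (hn : (2 : ZMod n) ≠ 0) {M : Set (Sym2 (ZMod n))} :
    IsMatching (cycleGraph n) M ↔ ∃ S, NoConsecutive S ∧ cycleEdge '' S = M := by
  have h1 : (1 : ZMod n) ≠ 0 := fun h => hn (by rw [← one_add_one_eq_two, h, add_zero])
  rw [IsMatching, edgeSet_cycleGraph h1]
  constructor
  · rintro ⟨hM, hdisj⟩
    refine ⟨cycleEdge ⁻¹' M, fun i hi hi1 => ?_, Set.image_preimage_eq_of_subset hM⟩
    refine hdisj _ hi _ hi1 (fun h => h1 ?_) (i + 1) ?_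
    · simpa using cycleEdge_injective hn h
    · simp [cycleEdge]
  · rintro ⟨S, hS, rfl⟩
    refine ⟨Set.image_subset_range _ _, ?_⟩
    rintro _ ⟨i, hi, rfl⟩ _ ⟨j, hj, rfl⟩ hne v hv
    rcases exists_mem_cycleEdge_iff.mp ⟨v, hv⟩ with rfl | rfl | rfl
    · exact hS _ hj (by simpa using hi)
    · exact hne rfl
    · exact hS _ hi hj

theorem maximal_noConsecutive_iff (hn : (1 : ZMod n) ≠ 0) {S : Set (ZMod n)} :
    Maximal NoConsecutive S ↔ NoConsecutive S ∧ ∀ i, i ∈ S ∨ i + 1 ∈ S ∨ i + 2 ∈ S := by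
  refine ⟨fun h => ⟨h.prop, fun i => ?_⟩, fun ⟨hS, hcover⟩ => ⟨hS, fun T hT hST j hj => ?_⟩⟩
  · by_contra! hgap
    obtain ⟨h0, h1, h2⟩ := hgap
    have : NoConsecutive (insert (i + 1) S) := by
      rintro k (rfl | hk) (hk1 | hk1)
      · exact hn (by simpa using hk1)
      · exact h2 (by rwa [add_assoc, one_add_one_eq_two] at hk1)
      · exact h0 (by rwa [← add_right_cancel hk1])
      · exact h.prop k hk hk1
    exact h1 (h.le_of_ge this (Set.subset_insert _ _) (Set.mem_insert _ _))
  · rcases hcover (j - 1) with h | h | h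
    · exact absurd hj (by simpa using hT _ (hST h))
    · simpa using h
    · exact absurd (hST (by simpa [show j - 1 + 2 = j + 1 by ring] using h)) (hT _ hj)

theorem setOf_isMaximalMatching_cycleGraph (hn : (2 : ZMod n) ≠ 0) :
    {M | IsMaximalMatching (cycleGraph n) M} =
      Set.image cycleEdge '' {S | Maximal NoConsecutive S} := by
  have hmatch : IsMatching (cycleGraph n) = fun M => ∃ S, NoConsecutive S ∧ cycleEdge '' S = M :=
    funext fun _ => propext (isMatching_cycleGraph_iff hn)
  simp only [isMaximalMatching_iff_maximal, hmatch]
  exact (image_monotone_setOfPred_maximal fun _ _ _ _ =>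
    Set.image_subset_image_iff (cycleEdge_injective hn)).symm

theorem card_maximalMatching_cycleGraph (hn : (2 : ZMod n) ≠ 0) :
    Nat.card {M // IsMaximalMatching (cycleGraph n) M} =
      Nat.card {S : Set (ZMod n) // Maximal NoConsecutive S} := by
  change Nat.card {M | IsMaximalMatching (cycleGraph n) M} = _
  rw [setOf_isMaximalMatching_cycleGraph hn]
  exact Nat.card_image_of_injective (Set.image_injective.mpr (cycleEdge_injective hn)) _

end CycleGraph

section Perrin

/-- `nextGapRel a b`: `a` and `b` can be the distances from `i` and from `i + 1` to the nearest
element of `S` at or after them, for `S` without two consecutive elements and meeting any three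
consecutive residues. -/
def nextGapRel (a b : Fin 3) : Prop := if a = 0 then b ≠ 0 else a = b + 1

instance : DecidableRel nextGapRel := fun a b => by unfold nextGapRel; infer_instance

theorem nextGapRel_chain_eq {a b c : Fin 3} (hab : nextGapRel a b) (hbc : nextGapRel b c) :
    (if a = 0 then 0 else if b = 0 then 1 else 2) = a := by
  revert a b c; decide

theorem nextGapRel_chain_exists_zero {a b c : Fin 3} (hab : nextGapRel a b)
    (hbc : nextGapRel b c) : a = 0 ∨ b = 0 ∨ c = 0 := by
  revert a b c; decide

open Classical in
noncomputable def nextGapEquiv (n : ℕ) :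
    {S : Set (ZMod n) // NoConsecutive S ∧ ∀ i, i ∈ S ∨ i + 1 ∈ S ∨ i + 2 ∈ S} ≃
      CyclicChain nextGapRel n where
  toFun S := ⟨fun i => if i ∈ S.1 then 0 else if i + 1 ∈ S.1 then 1 else 2, fun i => by
    have h0 := S.2.1 i
    have h1 := S.2.1 (i + 1)
    have h2 := S.2.2 i
    dsimp only
    rw [add_assoc, one_add_one_eq_two] at h1 ⊢
    by_cases i ∈ S.1 <;> by_cases i + 1 ∈ S.1 <;> by_cases i + 2 ∈ S.1 <;>
      simp_all [nextGapRel]⟩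
  invFun g := ⟨{i | g.1 i = 0}, fun i (hi : g.1 i = 0) => by
    simpa [hi, nextGapRel] using g.2 i, fun i => by
    simpa [add_assoc, one_add_one_eq_two] using
      nextGapRel_chain_exists_zero (g.2 i) (g.2 (i + 1))⟩
  left_inv S := Subtype.ext <| Set.ext fun i => by
    simp only [Set.mem_ofPred_eq]
    split_ifs <;> simp_all
  right_inv g := Subtype.ext <| funext fun i => by
    convert nextGapRel_chain_eq (g.2 i) (g.2 (i + 1)) <;> rfl

theorem relMatrix_nextGapRel_pow_three :
    relMatrix nextGapRel ^ 3 = relMatrix nextGapRel + 1 := by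
  decide

theorem trace_relMatrix_nextGapRel_pow : ∀ n, (relMatrix nextGapRel ^ n).trace = perrin n
  | 0 | 1 | 2 | 3 => by decide
  | n + 4 => by
    have h : relMatrix nextGapRel ^ (n + 4) =
        relMatrix nextGapRel ^ (n + 2) + relMatrix nextGapRel ^ (n + 1) := by
      rw [pow_add _ (n + 1) 3, relMatrix_nextGapRel_pow_three, mul_add, mul_one, ← pow_succ]
    rw [h, Matrix.trace_add, trace_relMatrix_nextGapRel_pow (n + 2),
      trace_relMatrix_nextGapRel_pow (n + 1), perrin]

end Perrin

/-- The number of maximal matchings in an undirected cycle with `ℓ ≥ 3` edges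
equals the Perrin number `Q_ℓ`. -/
theorem stmt_7 (ℓ : ℕ) (hℓ : 3 ≤ ℓ) :
    Nat.card {M : Set (Sym2 (ZMod ℓ)) // IsMaximalMatching (cycleGraph ℓ) M} =
    perrin ℓ := by
  have : Fact (1 < ℓ) := ⟨by omega⟩
  have h2 : (2 : ZMod ℓ) ≠ 0 := by
    have : ¬ℓ ∣ 2 := fun h => absurd (Nat.le_of_dvd two_pos h) (by omega)
    exact_mod_cast (ZMod.natCast_eq_zero_iff 2 ℓ).not.mpr this
  rw [card_maximalMatching_cycleGraph h2, ← trace_relMatrix_nextGapRel_pow, ← card_cyclicChain,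
    ← Nat.card_eq_fintype_card]
  exact Nat.card_congr <|
    (Equiv.subtypeEquivRight fun _ => maximal_noConsecutive_iff one_ne_zero).trans (nextGapEquiv ℓ)
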